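/- arXiv:1211.6220 — 4 statements merged into one kernel-verified Lean document; each statement's English description precedes it below -/
import Mathlib

section
/- Let f : ℝ^n → ℝ^n be C² with |Df(y)| ≤ K₁ and |D²f(y)| ≤ K₂ for all y, and let g : ℝ^n → ℝ^n be C¹ with |g(y)| ≤ G and |Dg(y)| ≤ G for all y. Let T > 0, and let y, y_ε, φ : [0, T] → ℝ^n be differentiable with y'(t) = f(y(t)), y_ε'(t) = f(y_ε(t)) + ε·g(y_ε(t)), y(0) = y_ε(0), and φ'(t) = Df(y(t))·φ(t) + g(y(t)) with φ(0) = 0. Then there exists a constant C, depending only on K₁, K₂, G and T, such that for all t ∈ [0, T] and all ε ∈ (0, 1], |y_ε(t) − y(t) − ε·φ(t)| ≤ C ε². -/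
/-!
The perturbed and unperturbed flows stay `O(ε)` apart by Grönwall's inequality, since their
vector fields differ by `ε g` and `f` is `K₁`-Lipschitz. The defect `r = y_ε - y - ε φ` then
satisfies `r' = Df(y) r + R`, where `R` collects the second-order Taylor remainder of `f` and
`ε (g(y_ε) - g(y))`; both are `O(ε²)` by the first estimate, so a second application of
Grönwall's inequality gives `‖r‖ = O(ε²)`.
-/

open Set

lemma gronwallBound_zero_mul (K c δ x : ℝ) :
    gronwallBound 0 K (c * δ) x = c * gronwallBound 0 K δ x := by
  unfold gronwallBound
  split_ifs <;> ring

lemma gronwallBound_zero_nonneg {K δ x : ℝ} (hK : 0 ≤ K) (hδ : 0 ≤ δ) (hx : 0 ≤ x) :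
    0 ≤ gronwallBound 0 K δ x := by
  simpa [gronwallBound_x0] using gronwallBound_mono le_rfl hδ hK hx

theorem norm_le_mul_gronwallBound_of_hasDerivAt {E : Type*} [NormedAddCommGroup E]
    [NormedSpace ℝ E] {u u' : ℝ → E} {K c δ T : ℝ} (hK : 0 ≤ K) (hc : 0 ≤ c) (hδ : 0 ≤ δ)
    (hu : ∀ t ∈ Icc 0 T, HasDerivAt u (u' t) t) (hu0 : u 0 = 0)
    (bound : ∀ t ∈ Ico 0 T, ‖u' t‖ ≤ K * ‖u t‖ + c * δ) :
    ∀ t ∈ Icc 0 T, ‖u t‖ ≤ c * gronwallBound 0 K δ T := by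
  intro t ht
  have hgronwall := norm_le_gronwallBound_of_norm_deriv_right_le
    (fun t ht => (hu t ht).continuousAt.continuousWithinAt)
    (fun t ht => (hu t (Ico_subset_Icc_self ht)).hasDerivWithinAt)
    (δ := 0) (by simp [hu0]) bound t ht
  calc ‖u t‖ ≤ c * gronwallBound 0 K δ t := by
        rwa [sub_zero, gronwallBound_zero_mul] at hgronwall
    _ ≤ c * gronwallBound 0 K δ T := by
        gcongr
        exact gronwallBound_mono le_rfl hδ hK ht.2

section Calculus

variable {𝕜 E F : Type*} [NontriviallyNormedField 𝕜] [NormedAddCommGroup E] [NormedSpace 𝕜 E]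
  [NormedAddCommGroup F] [NormedSpace 𝕜 F]

lemma norm_fderiv_fderiv_eq_norm_iteratedFDeriv_two (f : E → F) (x : E) :
    ‖fderiv 𝕜 (fderiv 𝕜 f) x‖ = ‖iteratedFDeriv 𝕜 2 f x‖ := by
  rw [← norm_iteratedFDeriv_one, norm_iteratedFDeriv_fderiv]

end Calculus

section MeanValue

variable {E F : Type*} [NormedAddCommGroup E] [NormedSpace ℝ E] [NormedAddCommGroup F]
  [NormedSpace ℝ F] {f : E → F} {C : ℝ}

lemma norm_sub_le_of_forall_norm_fderiv_le (hf : Differentiable ℝ f)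
    (bound : ∀ x, ‖fderiv ℝ f x‖ ≤ C) (a b : E) : ‖f b - f a‖ ≤ C * ‖b - a‖ :=
  convex_univ.norm_image_sub_le_of_norm_fderiv_le (fun x _ => hf x) (fun x _ => bound x)
    (mem_univ a) (mem_univ b)

lemma norm_sub_sub_fderiv_le_of_lipschitz_fderiv (hf : Differentiable ℝ f)
    (hDf : ∀ a b, ‖fderiv ℝ f b - fderiv ℝ f a‖ ≤ C * ‖b - a‖) (hC : 0 ≤ C) (a b : E) :
    ‖f b - f a - fderiv ℝ f a (b - a)‖ ≤ C * ‖b - a‖ ^ 2 := by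
  have hball : ∀ x ∈ Metric.closedBall a ‖b - a‖,
      ‖fderiv ℝ f x - fderiv ℝ f a‖ ≤ C * ‖b - a‖ := fun x hx =>
    (hDf a x).trans (mul_le_mul_of_nonneg_left (by simpa [dist_eq_norm] using hx) hC)
  have := (convex_closedBall a ‖b - a‖).norm_image_sub_le_of_norm_fderiv_le' (fun x _ => hf x)
    hball (Metric.mem_closedBall_self (norm_nonneg _)) (y := b) (by simp [dist_eq_norm])
  rwa [mul_assoc, ← sq] at this

end MeanValue

section Linearization

variable {E : Type*} [NormedAddCommGroup E] [NormedSpace ℝ E] {f g : E → E} {K₁ K₂ G ε T : ℝ}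
  {y yε φ : ℝ → E}

lemma norm_perturbed_sub_le (hfL : ∀ a b, ‖f b - f a‖ ≤ K₁ * ‖b - a‖) (hK₁ : 0 ≤ K₁)
    (hg : ∀ x, ‖g x‖ ≤ G) (hε : 0 ≤ ε)
    (hy : ∀ t ∈ Icc 0 T, HasDerivAt y (f (y t)) t)
    (hyε : ∀ t ∈ Icc 0 T, HasDerivAt yε (f (yε t) + ε • g (yε t)) t) (h0 : y 0 = yε 0) :
    ∀ t ∈ Icc 0 T, ‖yε t - y t‖ ≤ ε * gronwallBound 0 K₁ G T := by
  refine norm_le_mul_gronwallBound_of_hasDerivAt hK₁ hε ((norm_nonneg _).trans (hg 0))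
    (fun t ht => (hyε t ht).sub (hy t ht)) (by simp [h0]) fun t _ => ?_
  calc ‖f (yε t) + ε • g (yε t) - f (y t)‖ = ‖(f (yε t) - f (y t)) + ε • g (yε t)‖ := by
        congr 1; abel
    _ ≤ K₁ * ‖yε t - y t‖ + ε * G := by
        grw [norm_add_le, norm_smul, Real.norm_of_nonneg hε, hfL, hg]

/-- The derivative of the defect `yε - y - ε φ`, evaluated at `xε = yε t`, `x = y t`,
`v = φ t`, is a linear term in the defect plus an `O(ε²)` remainder. -/
lemma norm_linearization_defect_le
    (hDf : ∀ x, ‖fderiv ℝ f x‖ ≤ K₁)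
    (hTaylor : ∀ a b, ‖f b - f a - fderiv ℝ f a (b - a)‖ ≤ K₂ * ‖b - a‖ ^ 2) (hK₂ : 0 ≤ K₂)
    (hgL : ∀ a b, ‖g b - g a‖ ≤ G * ‖b - a‖) (hG : 0 ≤ G) (hε : 0 ≤ ε)
    {x xε v : E} {D : ℝ} (hD : ‖xε - x‖ ≤ ε * D) :
    ‖f xε + ε • g xε - f x - ε • (fderiv ℝ f x v + g x)‖
      ≤ K₁ * ‖xε - x - ε • v‖ + ε ^ 2 * (K₂ * D ^ 2 + G * D) := by
  have hD₀ : 0 ≤ ε * D := (norm_nonneg _).trans hD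
  have hsplit : f xε + ε • g xε - f x - ε • (fderiv ℝ f x v + g x)
      = fderiv ℝ f x (xε - x - ε • v)
        + ((f xε - f x - fderiv ℝ f x (xε - x)) + ε • (g xε - g x)) := by
    simp only [map_sub, map_smul, smul_add, smul_sub]
    abel
  calc ‖f xε + ε • g xε - f x - ε • (fderiv ℝ f x v + g x)‖
      ≤ ‖fderiv ℝ f x (xε - x - ε • v)‖
        + (‖f xε - f x - fderiv ℝ f x (xε - x)‖ + ε * ‖g xε - g x‖) := by
        rw [hsplit, ← norm_smul_of_nonneg hε]
        exact (norm_add_le _ _).trans (add_le_add_right (norm_add_le _ _) _)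
    _ ≤ K₁ * ‖xε - x - ε • v‖ + (K₂ * (ε * D) ^ 2 + ε * (G * (ε * D))) := by
        grw [ContinuousLinearMap.le_opNorm, hDf, hTaylor, hgL, hD]
    _ = K₁ * ‖xε - x - ε • v‖ + ε ^ 2 * (K₂ * D ^ 2 + G * D) := by ring

end Linearization

theorem stmt6_general {n : ℕ} (K₁ K₂ G T : ℝ) :
    ∃ C : ℝ,
      ∀ (f g : EuclideanSpace ℝ (Fin n) → EuclideanSpace ℝ (Fin n)),
        ContDiff ℝ 2 f →
        (∀ y, ‖fderiv ℝ f y‖ ≤ K₁) →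
        (∀ y, ‖iteratedFDeriv ℝ 2 f y‖ ≤ K₂) →
        ContDiff ℝ 1 g →
        (∀ y, ‖g y‖ ≤ G) →
        (∀ y, ‖fderiv ℝ g y‖ ≤ G) →
        ∀ ε ∈ Set.Ioc (0 : ℝ) 1,
        ∀ (y yε φ : ℝ → EuclideanSpace ℝ (Fin n)),
          (∀ t ∈ Set.Icc (0 : ℝ) T, HasDerivAt y (f (y t)) t) →
          (∀ t ∈ Set.Icc (0 : ℝ) T, HasDerivAt yε (f (yε t) + ε • g (yε t)) t) →
          y 0 = yε 0 →
          (∀ t ∈ Set.Icc (0 : ℝ) T,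
            HasDerivAt φ (fderiv ℝ f (y t) (φ t) + g (y t)) t) →
          φ 0 = 0 →
          ∀ t ∈ Set.Icc (0 : ℝ) T, ‖yε t - y t - ε • φ t‖ ≤ C * ε ^ 2 := by
  set C₁ := gronwallBound 0 K₁ G T
  refine ⟨gronwallBound 0 K₁ (K₂ * C₁ ^ 2 + G * C₁) T, ?_⟩
  intro f g hf hDf hD2f hg hgb hDg ε hε y yε φ hy hyε h0 hφ hφ0 t ht
  have hK₁ : 0 ≤ K₁ := (norm_nonneg _).trans (hDf 0)
  have hK₂ : 0 ≤ K₂ := (norm_nonneg _).trans (hD2f 0)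
  have hG : 0 ≤ G := (norm_nonneg _).trans (hgb 0)
  have hC₁ : 0 ≤ C₁ := gronwallBound_zero_nonneg hK₁ hG (ht.1.trans ht.2)
  have hTaylor := norm_sub_sub_fderiv_le_of_lipschitz_fderiv (hf.differentiable two_ne_zero)
    (norm_sub_le_of_forall_norm_fderiv_le
      ((hf.fderiv_right (m := 1) le_rfl).differentiable one_ne_zero)
      fun x => (norm_fderiv_fderiv_eq_norm_iteratedFDeriv_two f x).trans_le (hD2f x)) hK₂
  have hdist := norm_perturbed_sub_le
    (norm_sub_le_of_forall_norm_fderiv_le (hf.differentiable two_ne_zero) hDf) hK₁ hgb hε.1.le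
    hy hyε h0
  rw [mul_comm]
  refine norm_le_mul_gronwallBound_of_hasDerivAt hK₁ (sq_nonneg ε) (by positivity)
    (fun t ht => ((hyε t ht).sub (hy t ht)).sub ((hφ t ht).const_smul ε)) (by simp [h0, hφ0])
    (fun s hs => ?_) t ht
  exact norm_linearization_defect_le hDf hTaylor hK₂
    (norm_sub_le_of_forall_norm_fderiv_le (hg.differentiable one_ne_zero) hDg) hG hε.1.le
    (hdist s (Ico_subset_Icc_self hs))

/-- Second-order accuracy of the linearization of an ODE with respect to a
perturbation of its right-hand side: if `y' = f(y)`, `y_ε' = f(y_ε) + ε g(y_ε)`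
with the same initial data, and `φ` solves the linearized equation
`φ' = Df(y(t))·φ + g(y(t))`, `φ(0) = 0`, then `|y_ε(t) − y(t) − ε φ(t)| ≤ C ε²`
on `[0, T]`, with `C` depending only on the bounds `K₁, K₂, G` and `T`. -/
theorem stmt6 {n : ℕ} (K₁ K₂ G T : ℝ)
    (hK₁ : 0 < K₁) (hK₂ : 0 < K₂) (hG : 0 < G) (hT : 0 < T) :
    ∃ C : ℝ,
      ∀ (f g : EuclideanSpace ℝ (Fin n) → EuclideanSpace ℝ (Fin n)),
        ContDiff ℝ 2 f →
        (∀ y, ‖fderiv ℝ f y‖ ≤ K₁) →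
        (∀ y, ‖iteratedFDeriv ℝ 2 f y‖ ≤ K₂) →
        ContDiff ℝ 1 g →
        (∀ y, ‖g y‖ ≤ G) →
        (∀ y, ‖fderiv ℝ g y‖ ≤ G) →
        ∀ ε ∈ Set.Ioc (0 : ℝ) 1,
        ∀ (y yε φ : ℝ → EuclideanSpace ℝ (Fin n)),
          (∀ t ∈ Set.Icc (0 : ℝ) T, HasDerivAt y (f (y t)) t) →
          (∀ t ∈ Set.Icc (0 : ℝ) T, HasDerivAt yε (f (yε t) + ε • g (yε t)) t) →
          y 0 = yε 0 →
          (∀ t ∈ Set.Icc (0 : ℝ) T,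
            HasDerivAt φ (fderiv ℝ f (y t) (φ t) + g (y t)) t) →
          φ 0 = 0 →
          ∀ t ∈ Set.Icc (0 : ℝ) T, ‖yε t - y t - ε • φ t‖ ≤ C * ε ^ 2 :=
  stmt6_general K₁ K₂ G T
end

section
/- Let H be a Hilbert space and K a normed vector space (over ℝ or ℂ), and let T, T₁, T₂ : H → K be bounded linear operators such that T₁ and T₂ are compact. Suppose there is a constant C > 0 with ‖f‖_H ≤ C (‖T f‖_K + ‖T₁ f‖_K + ‖T₂ f‖_K) for all f ∈ H. Then there exists a constant C' > 0 such that ‖f‖_H ≤ C' ‖T f‖_K for every f in the orthogonal complement (ker T)^⊥ of the kernel of T. -/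
/-!
Suppose `T` is not bounded below on `(ker T)ᗮ`. Then there are unit vectors `uₙ ∈ (ker T)ᗮ`
with `T uₙ → 0`. By compactness of `T₁` and `T₂`, along a subsequence `T₁ uₙ` and `T₂ uₙ`
converge, and the a priori estimate makes this subsequence Cauchy. Its limit is a unit vector
of the closed subspace `(ker T)ᗮ` lying in `ker T`, which is absurd.
-/

open Filter Topology

theorem IsCompactOperator.prodMk {M N₁ N₂ : Type*} [Zero M] [TopologicalSpace M]
    [TopologicalSpace N₁] [TopologicalSpace N₂] {f : M → N₁} {g : M → N₂}
    (hf : IsCompactOperator f) (hg : IsCompactOperator g) :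
    IsCompactOperator fun x => (f x, g x) := by
  obtain ⟨K₁, hK₁, hfK₁⟩ := hf
  obtain ⟨K₂, hK₂, hgK₂⟩ := hg
  exact ⟨K₁ ×ˢ K₂, hK₁.prod hK₂, inter_mem hfK₁ hgK₂⟩

section PeetreLemma

variable {𝕜 E F G : Type*} [RCLike 𝕜]
  [NormedAddCommGroup E] [NormedSpace 𝕜 E]
  [NormedAddCommGroup F] [NormedSpace 𝕜 F]
  [NormedAddCommGroup G] [NormedSpace 𝕜 G]

theorem IsCompactOperator.exists_subseq_tendsto {S : E →L[𝕜] G} (hS : IsCompactOperator S)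
    {u : ℕ → E} {R : ℝ} (hu : ∀ n, ‖u n‖ ≤ R) :
    ∃ b, ∃ φ : ℕ → ℕ, StrictMono φ ∧ Tendsto (fun n => S (u (φ n))) atTop (𝓝 b) := by
  obtain ⟨b, -, φ, hφ, hb⟩ := (hS.isCompact_closure_image_closedBall (𝕜₁ := 𝕜) R).tendsto_subseq
    (x := fun n => S (u n)) fun n => subset_closure ⟨u n, mem_closedBall_zero_iff.2 (hu n), rfl⟩
  exact ⟨b, φ, hφ, hb⟩

theorem cauchySeq_of_norm_le_mul_add {T : E →L[𝕜] F} {S : E →L[𝕜] G} {C : ℝ}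
    (hbound : ∀ x, ‖x‖ ≤ C * (‖T x‖ + ‖S x‖)) {u : ℕ → E}
    (hT : CauchySeq fun n => T (u n)) (hS : CauchySeq fun n => S (u n)) : CauchySeq u := by
  rw [cauchySeq_iff_tendsto_dist_atTop_0] at hT hS ⊢
  refine squeeze_zero (fun _ => dist_nonneg) (fun p => ?_) (by simpa using (hT.add hS).const_mul C)
  simpa only [dist_eq_norm, map_sub] using hbound (u p.1 - u p.2)

theorem norm_le_mul_norm_of_forall_norm_eq_one {V : Submodule 𝕜 E} {T : E →L[𝕜] F} {ε : ℝ}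
    (hε : 0 < ε) (h : ∀ x ∈ V, ‖x‖ = 1 → ε ≤ ‖T x‖) (x : E) (hx : x ∈ V) :
    ‖x‖ ≤ ε⁻¹ * ‖T x‖ := by
  rcases eq_or_ne x 0 with rfl | hx₀
  · simp
  have hnorm : 0 < ‖x‖ := norm_pos_iff.2 hx₀
  have hunit := h ((‖x‖⁻¹ : 𝕜) • x) (V.smul_mem _ hx) (norm_smul_inv_norm hx₀)
  rw [map_smul, norm_smul, norm_inv, RCLike.norm_ofReal, abs_norm, inv_mul_eq_div,
    le_div_iff₀ hnorm] at hunit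
  rwa [le_inv_mul_iff₀ hε]

variable [CompleteSpace E]

theorem exists_pos_le_norm_of_isCompactOperator {V : Submodule 𝕜 E} (hV : IsClosed (V : Set E))
    {T : E →L[𝕜] F} (hVT : Disjoint V (LinearMap.ker (T : E →ₗ[𝕜] F)))
    {S : E →L[𝕜] G} (hS : IsCompactOperator S) {C : ℝ}
    (hbound : ∀ x, ‖x‖ ≤ C * (‖T x‖ + ‖S x‖)) :
    ∃ ε > 0, ∀ x ∈ V, ‖x‖ = 1 → ε ≤ ‖T x‖ := by
  by_contra! h
  choose u huV hu_norm hTu_lt using fun n : ℕ => h (1 / (n + 1)) Nat.one_div_pos_of_nat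
  have hTu : Tendsto (fun n => T (u n)) atTop (𝓝 0) :=
    squeeze_zero_norm (fun n => (hTu_lt n).le) tendsto_one_div_add_atTop_nhds_zero_nat
  obtain ⟨b, φ, hφ, hSu⟩ := hS.exists_subseq_tendsto fun n => (hu_norm n).le
  have hTuφ := hTu.comp hφ.tendsto_atTop
  obtain ⟨x, hx⟩ := cauchySeq_tendsto_of_complete <|
    cauchySeq_of_norm_le_mul_add hbound hTuφ.cauchySeq hSu.cauchySeq
  have hxV : x ∈ V := hV.mem_of_tendsto hx (Eventually.of_forall fun n => huV _)
  have hTx : T x = 0 := tendsto_nhds_unique ((T.continuous.tendsto x).comp hx) hTuφ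
  have hx_norm : ‖x‖ = 1 := tendsto_nhds_unique hx.norm (by simp [hu_norm])
  have hx₀ : x = 0 := (Submodule.disjoint_def.1 hVT) x hxV hTx
  simp [hx₀] at hx_norm

theorem exists_pos_norm_le_mul_norm_of_isCompactOperator {V : Submodule 𝕜 E}
    (hV : IsClosed (V : Set E)) {T : E →L[𝕜] F} (hVT : Disjoint V (LinearMap.ker (T : E →ₗ[𝕜] F)))
    {S : E →L[𝕜] G} (hS : IsCompactOperator S) {C : ℝ}
    (hbound : ∀ x, ‖x‖ ≤ C * (‖T x‖ + ‖S x‖)) :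
    ∃ C' > 0, ∀ x ∈ V, ‖x‖ ≤ C' * ‖T x‖ := by
  obtain ⟨ε, hε, h⟩ := exists_pos_le_norm_of_isCompactOperator hV hVT hS hbound
  exact ⟨ε⁻¹, inv_pos.2 hε, norm_le_mul_norm_of_forall_norm_eq_one hε h⟩

end PeetreLemma

/-- If `T, T₁, T₂ : H → K` are bounded linear operators with `T₁, T₂` compact and
`‖f‖ ≤ C (‖Tf‖ + ‖T₁f‖ + ‖T₂f‖)` for all `f`, then there is a constant `C' > 0`
with `‖f‖ ≤ C' ‖Tf‖` for every `f` in the orthogonal complement of `ker T`. -/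
theorem stmt8 {𝕜 : Type*} [RCLike 𝕜]
    {H K : Type*} [NormedAddCommGroup H] [InnerProductSpace 𝕜 H] [CompleteSpace H]
    [NormedAddCommGroup K] [NormedSpace 𝕜 K]
    (T T₁ T₂ : H →L[𝕜] K)
    (hT₁ : IsCompactOperator T₁) (hT₂ : IsCompactOperator T₂)
    (C : ℝ) (hC : 0 < C)
    (hbound : ∀ f : H, ‖f‖ ≤ C * (‖T f‖ + ‖T₁ f‖ + ‖T₂ f‖)) :
    ∃ C' : ℝ, 0 < C' ∧ ∀ f ∈ (LinearMap.ker (T : H →ₗ[𝕜] K))ᗮ, ‖f‖ ≤ C' * ‖T f‖ := by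
  have hbound' : ∀ f, ‖f‖ ≤ (2 * C) * (‖T f‖ + ‖T₁.prod T₂ f‖) := fun f =>
    calc ‖f‖ ≤ C * (‖T f‖ + ‖T₁ f‖ + ‖T₂ f‖) := hbound f
      _ ≤ C * (‖T f‖ + ‖T₁.prod T₂ f‖ + ‖T₁.prod T₂ f‖) := by
        gcongr
        exacts [norm_fst_le (T₁.prod T₂ f), norm_snd_le (T₁.prod T₂ f)]
      _ ≤ (2 * C) * (‖T f‖ + ‖T₁.prod T₂ f‖) := by nlinarith [norm_nonneg (T f)]
  exact exists_pos_norm_le_mul_norm_of_isCompactOperator (Submodule.isClosed_orthogonal _)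
    (Submodule.orthogonal_disjoint _).symm (hT₁.prodMk hT₂) hbound'
end

section
/- Let n ≥ 1, T > 0, and let B, C, D : [0, T] → Mat_{n×n}(ℝ) be continuous with C(t) and D(t) symmetric for every t. Suppose M : [0, T] → Mat_{n×n}(ℂ) is differentiable and satisfies the matrix Riccati equation M'(t) = −B(t)ᵀ M(t) − M(t) B(t) − M(t) C(t) M(t) − D(t) with M(0) = i·Id. Then for every t ∈ [0, T], M(t) is symmetric (M(t)ᵀ = M(t)) and the imaginary part Im M(t) is positive definite. -/
/-!
`N = Mᵀ - M` solves the linear equation `N' = -(Bᵀ + M C) N - N (B + C Mᵀ)` with `N 0 = 0`, so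
`N = 0` by Grönwall. In the C⋆-algebra of complex matrices, `W = ℑ M = (M - M⋆) / 2i` solves the
Lyapunov equation `W' = -L⋆ W - W L` with `L = B + C M` and `W 0 = 1`. While `W` is invertible,
`(W⁻¹)' = W⁻¹ L⋆ + L W⁻¹`, so Grönwall bounds `‖W⁻¹‖` by `e^{2‖L‖t}`, i.e. `W ≥ e^{-2‖L‖T}` while
`W` is strictly positive; by continuity `W` can therefore never leave the strictly positive cone.
For symmetric `M`, `ℑ M` is the entrywise imaginary part.
-/

open Set Real Matrix
open scoped ComplexStarModule ComplexOrder Matrix.Norms.L2Operator MatrixOrder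

theorem norm_mul_add_mul_le {R : Type*} [NonUnitalSeminormedRing R] (p x q : R) :
    ‖p * x + x * q‖ ≤ (‖p‖ + ‖q‖) * ‖x‖ :=
  calc ‖p * x + x * q‖ ≤ ‖p‖ * ‖x‖ + ‖x‖ * ‖q‖ :=
        (norm_add_le _ _).trans (add_le_add (norm_mul_le _ _) (norm_mul_le _ _))
    _ = (‖p‖ + ‖q‖) * ‖x‖ := by ring

section NormedAlgebra

variable {R : Type*} [NormedRing R] [NormedAlgebra ℝ R]

theorem norm_le_of_hasDerivAt_mul_add_mul {f P Q : ℝ → R} {a b K : ℝ}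
    (hf : ∀ t ∈ Icc a b, HasDerivAt f (P t * f t + f t * Q t) t)
    (hK : ∀ t ∈ Icc a b, ‖P t‖ + ‖Q t‖ ≤ K) :
    ∀ t ∈ Icc a b, ‖f t‖ ≤ ‖f a‖ * exp (K * (t - a)) := by
  intro t ht
  rw [← gronwallBound_ε0]
  refine norm_le_gronwallBound_of_norm_deriv_right_le
    (fun s hs => (hf s hs).continuousAt.continuousWithinAt)
    (fun s hs => (hf s (Ico_subset_Icc_self hs)).hasDerivWithinAt) le_rfl (fun s hs => ?_) t ht
  rw [add_zero]
  exact (norm_mul_add_mul_le _ _ _).trans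
    (mul_le_mul_of_nonneg_right (hK s (Ico_subset_Icc_self hs)) (norm_nonneg _))

theorem eq_zero_of_hasDerivAt_mul_add_mul {f P Q : ℝ → R} {a b : ℝ}
    (hP : ContinuousOn P (Icc a b)) (hQ : ContinuousOn Q (Icc a b))
    (hf : ∀ t ∈ Icc a b, HasDerivAt f (P t * f t + f t * Q t) t) (ha : f a = 0) :
    ∀ t ∈ Icc a b, f t = 0 := by
  obtain ⟨K, hK⟩ := isCompact_Icc.exists_bound_of_continuousOn (hP.norm.add hQ.norm)
  intro t ht
  simpa [ha] using norm_le_of_hasDerivAt_mul_add_mul hf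
    (fun s hs => (le_abs_self _).trans (hK s hs)) t ht

theorem HasDerivAt.ringInverse [CompleteSpace R] {W : ℝ → R} {W' : R} {t : ℝ}
    (hW : HasDerivAt W W' t) (hu : IsUnit (W t)) :
    HasDerivAt (fun s => Ring.inverse (W s))
      (-(Ring.inverse (W t) * W' * Ring.inverse (W t))) t := by
  obtain ⟨u, hu⟩ := hu
  have hinv := hasFDerivAt_ringInverse (𝕜 := ℝ) u
  rw [hu] at hinv
  simpa [← hu, Function.comp_def] using hinv.comp_hasDerivAt t hW

end NormedAlgebra

section CStarAlgebra

variable {A : Type*} [CStarAlgebra A] [PartialOrder A] [StarOrderedRing A]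

theorem IsStrictlyPositive.algebraMap_inv_norm_ringInverse_le {a : A}
    (ha : IsStrictlyPositive a) : algebraMap ℝ A ‖Ring.inverse a‖⁻¹ ≤ a := by
  nontriviality A
  have hinv : IsStrictlyPositive (Ring.inverse a) := ha.ringInverse
  have hnorm : ‖Ring.inverse a‖ ≠ 0 := norm_ne_zero_iff.2 hinv.isUnit.ne_zero
  have h := CStarAlgebra.ringInverse_le_ringInverse hinv.isSelfAdjoint.le_algebraMap_norm_self
  have hmap : Ring.inverse (algebraMap ℝ A ‖Ring.inverse a‖)
      = algebraMap ℝ A ‖Ring.inverse a‖⁻¹ := by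
    simpa using Ring.inverse_unit ((Units.mk0 _ hnorm).map (algebraMap ℝ A).toMonoidHom)
  rwa [Ring.inverse_inverse ha.isUnit, hmap] at h

theorem IsStrictlyPositive.of_norm_sub_lt {a b : A} {r : ℝ} (hab : algebraMap ℝ A r ≤ a)
    (hb : IsSelfAdjoint b) (h : ‖b - a‖ < r) : IsStrictlyPositive b := by
  have ha : IsSelfAdjoint a := by
    simpa using
      (IsSelfAdjoint.of_nonneg (sub_nonneg.2 hab)).add (IsSelfAdjoint.algebraMap A (.all r))
  have hle : algebraMap ℝ A (r - ‖b - a‖) ≤ b := by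
    simpa [sub_eq_add_neg] using add_le_add hab (hb.sub ha).neg_algebraMap_norm_le_self
  exact (isStrictlyPositive_algebraMap (sub_pos.2 h)).of_le hle

theorem algebraMap_le_of_hasDerivAt_mul_add_mul {W P Q : ℝ → A} {a b K : ℝ}
    (hW : ∀ t ∈ Icc a b, HasDerivAt W (P t * W t + W t * Q t) t)
    (hK : ∀ t ∈ Icc a b, ‖P t‖ + ‖Q t‖ ≤ K)
    (hpos : ∀ t ∈ Icc a b, IsStrictlyPositive (W t)) :
    ∀ t ∈ Icc a b, algebraMap ℝ A (‖Ring.inverse (W a)‖ * exp (K * (t - a)))⁻¹ ≤ W t := by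
  nontriviality A
  have hV : ∀ t ∈ Icc a b, HasDerivAt (fun s => Ring.inverse (W s))
      (-Q t * Ring.inverse (W t) + Ring.inverse (W t) * -P t) t := by
    intro t ht
    have hu := (hpos t ht).isUnit
    convert (hW t ht).ringInverse hu using 1
    simp only [mul_add, add_mul, ← mul_assoc, Ring.inverse_mul_cancel _ hu, one_mul]
    simp only [mul_assoc, Ring.mul_inverse_cancel _ hu, mul_one]
    noncomm_ring
  intro t ht
  have hVt := norm_le_of_hasDerivAt_mul_add_mul hV
    (fun s hs => by simpa only [norm_neg, add_comm] using hK s hs) t ht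
  have hVpos : 0 < ‖Ring.inverse (W t)‖ := norm_pos_iff.2 (hpos t ht).isUnit.ringInverse.ne_zero
  calc algebraMap ℝ A (‖Ring.inverse (W a)‖ * exp (K * (t - a)))⁻¹
      ≤ algebraMap ℝ A ‖Ring.inverse (W t)‖⁻¹ := by gcongr
    _ ≤ W t := (hpos t ht).algebraMap_inv_norm_ringInverse_le

theorem isStrictlyPositive_of_hasDerivAt_mul_add_mul {W P Q : ℝ → A} {a b : ℝ}
    (hP : ContinuousOn P (Icc a b)) (hQ : ContinuousOn Q (Icc a b))
    (hW : ∀ t ∈ Icc a b, HasDerivAt W (P t * W t + W t * Q t) t)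
    (hsa : ∀ t ∈ Icc a b, IsSelfAdjoint (W t)) (ha : IsStrictlyPositive (W a)) :
    ∀ t ∈ Icc a b, IsStrictlyPositive (W t) := by
  nontriviality A
  obtain ⟨K, hK⟩ := isCompact_Icc.exists_bound_of_continuousOn (hP.norm.add hQ.norm)
  replace hK : ∀ t ∈ Icc a b, ‖P t‖ + ‖Q t‖ ≤ K := fun t ht => (le_abs_self _).trans (hK t ht)
  intro t₁ ht₁
  have hab : a ≤ b := ht₁.1.trans ht₁.2
  have hK0 : 0 ≤ K := (add_nonneg (norm_nonneg _) (norm_nonneg _)).trans (hK a ⟨le_rfl, hab⟩)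
  have hV0 : 0 < ‖Ring.inverse (W a)‖ := norm_pos_iff.2 ha.isUnit.ringInverse.ne_zero
  set r := (‖Ring.inverse (W a)‖ * exp (K * (b - a)))⁻¹
  have hr : 0 < r := by positivity
  have hr_le : ∀ u ∈ Icc a b, r ≤ (‖Ring.inverse (W a)‖ * exp (K * (u - a)))⁻¹ :=
    fun u hu => inv_anti₀ (by positivity) (by gcongr; exact hu.2)
  -- Real induction: `W ≥ r` on `[a, t]` keeps `W` strictly positive a little beyond `t`, and
  -- then the Grönwall bound on `W⁻¹` gives back `W ≥ r` there.
  suffices Icc a b ⊆ {t | algebraMap ℝ A r ≤ W t} from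
    (isStrictlyPositive_algebraMap hr).of_le (this ht₁)
  refine IsClosed.Icc_subset_of_forall_mem_nhdsGT_of_Icc_subset ?_ ?_ ?_
  · rw [inter_comm]
    exact ContinuousOn.preimage_isClosed_of_isClosed
      (fun t ht => (hW t ht).continuousAt.continuousWithinAt) isClosed_Icc isClosed_Ici
  · refine le_trans ?_ ha.algebraMap_inv_norm_ringInverse_le
    gcongr
    simpa using hr_le a ⟨le_rfl, hab⟩
  · intro t ht hs
    obtain ⟨δ, hδ, hclose⟩ :=
      Metric.continuousAt_iff.1 (hW t (Ico_subset_Icc_self ht)).continuousAt r hr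
    refine Filter.mem_of_superset (Ioo_mem_nhdsGT (lt_min (lt_add_of_pos_right t hδ) ht.2))
      fun u hu => ?_
    have hua : u ∈ Icc a b := ⟨ht.1.trans hu.1.le, (hu.2.trans_le (min_le_right _ _)).le⟩
    have hpos : ∀ v ∈ Icc a u, IsStrictlyPositive (W v) := by
      intro v hv
      rcases le_or_gt v t with hvt | htv
      · exact (isStrictlyPositive_algebraMap hr).of_le (hs ⟨hv.1, hvt⟩)
      · refine .of_norm_sub_lt (hs ⟨ht.1, le_rfl⟩) (hsa v ⟨hv.1, hv.2.trans hua.2⟩) ?_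
        rw [← dist_eq_norm]
        refine hclose ?_
        rw [Real.dist_eq, abs_lt]
        constructor <;> linarith [hv.2, hu.2.trans_le (min_le_left _ _)]
    refine (algebraMap_mono A (hr_le u hua)).trans ?_
    exact algebraMap_le_of_hasDerivAt_mul_add_mul (fun v hv => hW v ⟨hv.1, hv.2.trans hua.2⟩)
      (fun v hv => hK v ⟨hv.1, hv.2.trans hua.2⟩) hpos u ⟨hua.1, le_rfl⟩

end CStarAlgebra

theorem imaginaryPart_riccati {A : Type*} [Ring A] [StarRing A] [Algebra ℂ A] [StarModule ℂ A]
    (P C D M : A) (hC : IsSelfAdjoint C) (hD : IsSelfAdjoint D) :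
    (ℑ (-star P * M - M * P - M * C * M - D) : A)
      = -star (P + C * M) * ℑ M + ℑ M * -(P + C * M) := by
  simp only [imaginaryPart_apply_coe, star_sub, star_mul, star_neg, star_star, hC.star_eq,
    hD.star_eq, star_add, mul_smul_comm, smul_mul_assoc, ← smul_add]
  congr 2
  noncomm_ring

theorem HasDerivAt.imaginaryPart {A : Type*} [NormedAddCommGroup A] [NormedSpace ℂ A]
    [StarAddMonoid A] [StarModule ℂ A] [ContinuousStar A] {f : ℝ → A} {f' : A} {t : ℝ}
    (hf : HasDerivAt f f' t) : HasDerivAt (fun s => (ℑ (f s) : A)) (ℑ f') t := by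
  simp only [imaginaryPart_apply_coe]
  exact ((hf.sub hf.star).const_smul _).const_smul _

theorem isStrictlyPositive_imaginaryPart_of_hasDerivAt_riccati {A : Type*} [CStarAlgebra A]
    [PartialOrder A] [StarOrderedRing A] {M P C D : ℝ → A} {a b : ℝ}
    (hP : ContinuousOn P (Icc a b)) (hC : ContinuousOn C (Icc a b))
    (hCs : ∀ t ∈ Icc a b, IsSelfAdjoint (C t)) (hDs : ∀ t ∈ Icc a b, IsSelfAdjoint (D t))
    (hM : ∀ t ∈ Icc a b,
      HasDerivAt M (-star (P t) * M t - M t * P t - M t * C t * M t - D t) t)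
    (ha : IsStrictlyPositive (ℑ (M a) : A)) :
    ∀ t ∈ Icc a b, IsStrictlyPositive (ℑ (M t) : A) := by
  have hL : ContinuousOn (fun t => P t + C t * M t) (Icc a b) :=
    hP.add (hC.mul fun t ht => (hM t ht).continuousAt.continuousWithinAt)
  refine isStrictlyPositive_of_hasDerivAt_mul_add_mul (P := fun t => -star (P t + C t * M t))
    (Q := fun t => -(P t + C t * M t)) hL.star.neg hL.neg (fun t ht => ?_)
    (fun t _ => (ℑ (M t)).prop) ha
  rw [← imaginaryPart_riccati _ _ _ _ (hCs t ht) (hDs t ht)]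
  exact (hM t ht).imaginaryPart

theorem ContinuousOn.matrix_transpose {X m n R : Type*} [TopologicalSpace X] [TopologicalSpace R]
    {A : X → Matrix m n R} {s : Set X} (hA : ContinuousOn A s) :
    ContinuousOn (fun x => (A x)ᵀ) s :=
  continuous_id.matrix_transpose.comp_continuousOn hA

namespace Matrix

variable {n : Type*}

theorem transpose_riccati_sub [Fintype n] {R : Type*} [CommRing R] (P C D M : Matrix n n R)
    (hC : C.IsSymm) (hD : D.IsSymm) :
    (-Pᵀ * M - M * P - M * C * M - D)ᵀ - (-Pᵀ * M - M * P - M * C * M - D)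
      = -(Pᵀ + M * C) * (Mᵀ - M) + (Mᵀ - M) * -(P + C * Mᵀ) := by
  simp only [transpose_sub, transpose_neg, transpose_mul, transpose_transpose, hC.eq, hD.eq]
  noncomm_ring

theorem transpose_map_ofReal (B : Matrix n n ℝ) :
    (B.map ((↑) : ℝ → ℂ))ᵀ = star (B.map ((↑) : ℝ → ℂ)) := by
  ext i j
  simp

theorem IsSymm.isSelfAdjoint_map_ofReal {C : Matrix n n ℝ} (hC : C.IsSymm) :
    IsSelfAdjoint (C.map ((↑) : ℝ → ℂ)) := by
  rw [IsSelfAdjoint, ← transpose_map_ofReal, ← transpose_map, hC.eq]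

theorem IsSymm.imaginaryPart_eq_map_im {M : Matrix n n ℂ} (hM : M.IsSymm) :
    (ℑ M : Matrix n n ℂ) = (M.map Complex.im).map ((↑) : ℝ → ℂ) := by
  ext i j
  simp only [imaginaryPart_apply_coe, smul_apply, sub_apply, star_apply, hM.apply, map_apply]
  apply Complex.ext <;> simp; ring

theorem PosDef.of_map_ofReal [Fintype n] {W : Matrix n n ℝ}
    (h : (W.map ((↑) : ℝ → ℂ)).PosDef) : W.PosDef := by
  refine posDef_iff_dotProduct_mulVec.2 ⟨?_, fun x hx => ?_⟩
  · ext i j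
    simpa using congr_fun₂ h.isHermitian i j
  · have := h.dotProduct_mulVec_pos (x := fun i => (x i : ℂ)) fun h0 =>
      hx (funext fun i => by simpa using congr_fun h0 i)
    simp only [dotProduct, mulVec, map_apply, Pi.star_apply, Complex.star_def,
      Complex.conj_ofReal] at this
    exact_mod_cast this

-- The L² operator norm is set up to induce the entrywise topology.
theorem hasDerivAt_iff {m : Type*} [Fintype m] [Fintype n] [DecidableEq n]
    {f : ℝ → Matrix m n ℂ} {f' : Matrix m n ℂ} {t : ℝ} :
    HasDerivAt f f' t ↔ ∀ i j, HasDerivAt (fun s => f s i j) (f' i j) t := by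
  refine (hasDerivAt_iff_tendsto_slope (f := f) (f' := f') (x := t)).trans ?_
  simp only [hasDerivAt_iff_tendsto_slope]
  refine (tendsto_pi_nhds (A := fun _ : m => n → ℂ)).trans (forall_congr' fun i => ?_)
  exact tendsto_pi_nhds (A := fun _ : n => ℂ)

theorem isSymm_of_hasDerivAt_riccati [Fintype n] [DecidableEq n]
    {M P C D : ℝ → Matrix n n ℂ} {a b : ℝ}
    (hP : ContinuousOn P (Icc a b)) (hC : ContinuousOn C (Icc a b))
    (hCs : ∀ t ∈ Icc a b, (C t).IsSymm) (hDs : ∀ t ∈ Icc a b, (D t).IsSymm)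
    (hM : ∀ t ∈ Icc a b,
      HasDerivAt M (-(P t)ᵀ * M t - M t * P t - M t * C t * M t - D t) t)
    (ha : (M a).IsSymm) :
    ∀ t ∈ Icc a b, (M t).IsSymm := by
  have hMc : ContinuousOn M (Icc a b) := fun t ht => (hM t ht).continuousAt.continuousWithinAt
  have hN : ∀ t ∈ Icc a b, HasDerivAt (fun t => (M t)ᵀ - M t)
      (-((P t)ᵀ + M t * C t) * ((M t)ᵀ - M t) + ((M t)ᵀ - M t) * -(P t + C t * (M t)ᵀ)) t := by
    intro t ht
    rw [← transpose_riccati_sub _ _ _ _ (hCs t ht) (hDs t ht)]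
    exact hasDerivAt_iff.2 fun i j =>
      (hasDerivAt_iff.1 (hM t ht) j i).sub (hasDerivAt_iff.1 (hM t ht) i j)
  intro t ht
  exact sub_eq_zero.1 (eq_zero_of_hasDerivAt_mul_add_mul
    (hP.matrix_transpose.add (hMc.mul hC)).neg (hP.add (hC.mul hMc.matrix_transpose)).neg
    hN (sub_eq_zero.2 ha) t ht)

end Matrix

theorem stmt11_general (n : ℕ) (T : ℝ)
    (B C D : ℝ → Matrix (Fin n) (Fin n) ℝ)
    (hB : ∀ i j, ContinuousOn (fun t => B t i j) (Set.Icc 0 T))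
    (hC : ∀ i j, ContinuousOn (fun t => C t i j) (Set.Icc 0 T))
    (hCsymm : ∀ t ∈ Set.Icc (0 : ℝ) T, (C t).IsSymm)
    (hDsymm : ∀ t ∈ Set.Icc (0 : ℝ) T, (D t).IsSymm)
    (M : ℝ → Matrix (Fin n) (Fin n) ℂ)
    (hM : ∀ t ∈ Set.Icc (0 : ℝ) T, ∀ i j : Fin n,
      HasDerivAt (fun s => M s i j)
        ((- ((B t).map (fun r => (r : ℂ)))ᵀ * M t
          - M t * (B t).map (fun r => (r : ℂ))
          - M t * (C t).map (fun r => (r : ℂ)) * M t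
          - (D t).map (fun r => (r : ℂ))) i j) t)
    (hM0 : M 0 = Complex.I • (1 : Matrix (Fin n) (Fin n) ℂ)) :
    ∀ t ∈ Set.Icc (0 : ℝ) T, (M t).IsSymm ∧ ((M t).map Complex.im).PosDef := by
  have hBc : ContinuousOn (fun t => (B t).map ((↑) : ℝ → ℂ)) (Icc 0 T) :=
    continuousOn_pi.2 fun i => continuousOn_pi.2 fun j =>
      Complex.continuous_ofReal.comp_continuousOn (hB i j)
  have hCc : ContinuousOn (fun t => (C t).map ((↑) : ℝ → ℂ)) (Icc 0 T) :=
    continuousOn_pi.2 fun i => continuousOn_pi.2 fun j =>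
      Complex.continuous_ofReal.comp_continuousOn (hC i j)
  have hMd : ∀ t ∈ Icc 0 T, HasDerivAt M (-((B t).map (↑))ᵀ * M t - M t * (B t).map (↑)
      - M t * (C t).map (↑) * M t - (D t).map ((↑) : ℝ → ℂ)) t :=
    fun t ht => hasDerivAt_iff.2 (hM t ht)
  have hsymm := isSymm_of_hasDerivAt_riccati hBc hCc (fun t ht => (hCsymm t ht).map _)
    (fun t ht => (hDsymm t ht).map _) hMd (by simp [hM0])
  have hpos := isStrictlyPositive_imaginaryPart_of_hasDerivAt_riccati hBc hCc
    (fun t ht => (hCsymm t ht).isSelfAdjoint_map_ofReal)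
    (fun t ht => (hDsymm t ht).isSelfAdjoint_map_ofReal)
    (by simpa only [transpose_map_ofReal] using hMd) (by simp [hM0, isStrictlyPositive_one])
  intro t ht
  refine ⟨hsymm t ht, PosDef.of_map_ofReal ?_⟩
  rw [← (hsymm t ht).imaginaryPart_eq_map_im]
  exact (hpos t ht).posDef

/-- The solution of the matrix Riccati equation
`M' = −Bᵀ M − M B − M C M − D`, `M(0) = i·Id`, along a Gaussian beam (with `B, C, D`
continuous real matrices, `C(t)`, `D(t)` symmetric) remains symmetric and has
positive definite imaginary part on `[0, T]`. -/
theorem stmt11 (n : ℕ) (hn : 1 ≤ n) (T : ℝ) (hT : 0 < T)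
    (B C D : ℝ → Matrix (Fin n) (Fin n) ℝ)
    (hB : ∀ i j, ContinuousOn (fun t => B t i j) (Set.Icc 0 T))
    (hC : ∀ i j, ContinuousOn (fun t => C t i j) (Set.Icc 0 T))
    (hD : ∀ i j, ContinuousOn (fun t => D t i j) (Set.Icc 0 T))
    (hCsymm : ∀ t ∈ Set.Icc (0 : ℝ) T, (C t).IsSymm)
    (hDsymm : ∀ t ∈ Set.Icc (0 : ℝ) T, (D t).IsSymm)
    (M : ℝ → Matrix (Fin n) (Fin n) ℂ)
    (hM : ∀ t ∈ Set.Icc (0 : ℝ) T, ∀ i j : Fin n,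
      HasDerivAt (fun s => M s i j)
        ((- ((B t).map (fun r => (r : ℂ)))ᵀ * M t
          - M t * (B t).map (fun r => (r : ℂ))
          - M t * (C t).map (fun r => (r : ℂ)) * M t
          - (D t).map (fun r => (r : ℂ))) i j) t)
    (hM0 : M 0 = Complex.I • (1 : Matrix (Fin n) (Fin n) ℂ)) :
    ∀ t ∈ Set.Icc (0 : ℝ) T, (M t).IsSymm ∧ ((M t).map Complex.im).PosDef :=
  stmt11_general n T B C D hB hC hCsymm hDsymm M hM hM0
end

section
/- Let n ≥ 1 and let c, A, K, R be positive constants. There exists a constant C > 0, depending only on n, c, A, K, R, such that the following holds for every λ ≥ 1. Let M be a complex symmetric n×n matrix with Im M ≥ c·Id, let v ∈ ℝ^n, and set τ*(z) = ⟨v, z⟩ + zᵀ M z. Let ρ : ℝ^n → ℂ satisfy |ρ(z)| ≤ K |z|³ for all z, set τ = τ* + ρ, and assume Im τ(z) ≥ (c/2)|z|² for all |z| ≤ R. Let a : ℝ → ℂ be differentiable with |a(s)| ≤ A λ^{n/4} and |a'(s)| ≤ A λ^{n/4} for all s ∈ ℝ. Then ( ∫_{B(0,R)} | a(z₁) e^{i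 λ τ(z)} − a(0) e^{i λ τ*(z)} |² dz )^{1/2} ≤ C λ^{−1/2}. -/
/-! Write the difference as `(a(z₁) - a(0)) e^{iλτ} + a(0) (e^{iλτ} - e^{iλτ*})`. Both phases have
imaginary part at least `(c/2)|z|²` on the ball, so the mean value inequality (for `a` on `ℝ` and
for `exp` on a half-plane) bounds the integrand by `A λ^{n/4} (|z| + λK|z|³) e^{-λc|z|²/2}`.
The substitution `z = u/√λ` turns the square of this bound, integrated over all of `ℝⁿ`, into
`A² λ⁻¹` times the `λ`-independent finite integral of `((|u| + K|u|³) e^{-c|u|²/2})²`. -/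

open MeasureTheory Matrix Complex

lemma pow_mul_exp_neg_mul_sq_le {a : ℝ} (ha : 0 < a) (t : ℝ) (m : ℕ) :
    t ^ (2 * m) * Real.exp (-(a * t ^ 2)) ≤ m.factorial / a ^ m := by
  have key := Real.pow_div_factorial_le_exp (a * t ^ 2) (by positivity) m
  rw [mul_pow, ← pow_mul, div_le_iff₀ (by positivity)] at key
  rw [Real.exp_neg, ← div_eq_mul_inv, div_le_div_iff₀ (Real.exp_pos _) (by positivity)]
  linarith

section Envelope

variable {V : Type*} [NormedAddCommGroup V] [InnerProductSpace ℝ V]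

variable (V) in
noncomputable def gaussEnvelope (K b : ℝ) (u : V) : ℝ :=
  (‖u‖ + K * ‖u‖ ^ 3) * Real.exp (-(b * ‖u‖ ^ 2))

lemma gaussEnvelope_smul (K b : ℝ) {s : ℝ} (hs : 0 ≤ s) (u : V) :
    gaussEnvelope V K b (s • u) = s * gaussEnvelope V (s ^ 2 * K) (s ^ 2 * b) u := by
  simp only [gaussEnvelope, norm_smul, Real.norm_of_nonneg hs]
  ring_nf

variable [FiniteDimensional ℝ V] [MeasurableSpace V] [BorelSpace V]

lemma integrable_exp_neg_mul_sq_norm {b : ℝ} (hb : 0 < b) :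
    Integrable (fun v : V => Real.exp (-(b * ‖v‖ ^ 2))) := by
  refine (GaussianFourier.integrable_cexp_neg_mul_sq_norm_add (V := V) (b := b)
    (by simpa using hb) 0 0).norm.congr (.of_forall fun v => ?_)
  dsimp only
  rw [Complex.norm_exp]
  norm_cast
  simp

lemma integrable_norm_pow_mul_exp_neg_mul_sq {b : ℝ} (hb : 0 < b) (m : ℕ) :
    Integrable (fun v : V => ‖v‖ ^ (2 * m) * Real.exp (-(b * ‖v‖ ^ 2))) := by
  refine ((integrable_exp_neg_mul_sq_norm (half_pos hb)).const_mul
    (m.factorial / (b / 2) ^ m)).mono' (by fun_prop) (.of_forall fun v => ?_)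
  have hsplit : Real.exp (-(b * ‖v‖ ^ 2))
      = Real.exp (-(b / 2 * ‖v‖ ^ 2)) * Real.exp (-(b / 2 * ‖v‖ ^ 2)) := by
    rw [← Real.exp_add]; ring_nf
  rw [Real.norm_of_nonneg (by positivity), hsplit, ← mul_assoc]
  exact mul_le_mul_of_nonneg_right (pow_mul_exp_neg_mul_sq_le (half_pos hb) _ m)
    (Real.exp_pos _).le

lemma integrable_gaussEnvelope_sq (K : ℝ) {b : ℝ} (hb : 0 < b) :
    Integrable (fun u => gaussEnvelope V K b u ^ 2) := by
  have h := ((integrable_norm_pow_mul_exp_neg_mul_sq (V := V) (mul_pos two_pos hb) 1).add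
    ((integrable_norm_pow_mul_exp_neg_mul_sq (mul_pos two_pos hb) 2).const_mul (2 * K))).add
    ((integrable_norm_pow_mul_exp_neg_mul_sq (mul_pos two_pos hb) 3).const_mul (K ^ 2))
  refine h.congr (.of_forall fun u => ?_)
  have hexp : Real.exp (-(2 * b * ‖u‖ ^ 2)) = Real.exp (-(b * ‖u‖ ^ 2)) ^ 2 := by
    rw [sq (Real.exp _), ← Real.exp_add]; ring_nf
  simp only [Pi.add_apply, gaussEnvelope, hexp]
  ring

lemma integral_gaussEnvelope_sq_scale (K b : ℝ) {lam : ℝ} (hlam : 0 < lam) :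
    ∫ u, gaussEnvelope V (lam * K) (lam * b) u ^ 2
      = (lam * lam ^ ((Module.finrank ℝ V : ℝ) / 2))⁻¹ * ∫ u, gaussEnvelope V K b u ^ 2 := by
  set s := √lam with hs_def
  have hs : 0 < s := Real.sqrt_pos.2 hlam
  have hs2 : s ^ 2 = lam := Real.sq_sqrt hlam.le
  have hsn : s ^ Module.finrank ℝ V = lam ^ ((Module.finrank ℝ V : ℝ) / 2) := by
    rw [hs_def, Real.sqrt_eq_rpow, ← Real.rpow_natCast, ← Real.rpow_mul hlam.le]
    ring_nf
  have hscaled : ∀ u : V, gaussEnvelope V (lam * K) (lam * b) u ^ 2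
      = lam⁻¹ * gaussEnvelope V K b (s • u) ^ 2 := by
    intro u
    rw [gaussEnvelope_smul K b hs.le, mul_pow, hs2, inv_mul_cancel_left₀ hlam.ne']
  simp_rw [hscaled]
  rw [integral_const_mul, Measure.integral_comp_smul_of_nonneg volume
    (fun u => gaussEnvelope V K b u ^ 2) s (hR := hs.le), hsn, smul_eq_mul, mul_inv]
  ring

lemma integral_sq_mul_gaussEnvelope_scale (A K b : ℝ) {lam : ℝ} (hlam : 0 < lam) :
    ∫ u, (A * lam ^ ((Module.finrank ℝ V : ℝ) / 4) * gaussEnvelope V (lam * K) (lam * b) u) ^ 2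
      = A ^ 2 / lam * ∫ u, gaussEnvelope V K b u ^ 2 := by
  have hamp : (lam ^ ((Module.finrank ℝ V : ℝ) / 4)) ^ 2
      = lam ^ ((Module.finrank ℝ V : ℝ) / 2) := by
    rw [← Real.rpow_natCast, ← Real.rpow_mul hlam.le]
    ring_nf
  simp only [mul_pow]
  rw [integral_const_mul, integral_gaussEnvelope_sq_scale K b hlam, hamp]
  field_simp

end Envelope

lemma setIntegral_le_integral_of_forall_le {α : Type*} [MeasurableSpace α] {μ : Measure α}
    {s : Set α} {f g : α → ℝ} (hs : MeasurableSet s) (hf : ∀ x, 0 ≤ f x) (hg : Integrable g μ)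
    (hg₀ : ∀ x, 0 ≤ g x) (hfg : ∀ x ∈ s, f x ≤ g x) :
    ∫ x in s, f x ∂μ ≤ ∫ x, g x ∂μ :=
  (integral_mono_of_nonneg (.of_forall hf) hg.integrableOn
    ((ae_restrict_iff' hs).2 (.of_forall hfg))).trans
    (setIntegral_le_integral hg (.of_forall hg₀))

lemma Complex.norm_exp_sub_exp_le {w w' : ℂ} {D : ℝ} (hw : w.re ≤ D) (hw' : w'.re ≤ D) :
    ‖cexp w - cexp w'‖ ≤ Real.exp D * ‖w - w'‖ :=
  (convex_halfSpace_re_le D).norm_image_sub_le_of_norm_hasDerivWithin_le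
    (fun z _ => (hasDerivAt_exp z).hasDerivWithinAt)
    (fun z hz => by rw [norm_exp]; exact Real.exp_le_exp.2 hz) hw' hw

lemma re_I_mul_ofReal_mul_le {lam κ : ℝ} (hlam : 0 ≤ lam) {w : ℂ} (hw : κ ≤ w.im) :
    (I * lam * w).re ≤ -(lam * κ) := by
  simpa using neg_le_neg (mul_le_mul_of_nonneg_left hw hlam)

lemma norm_mul_cexp_sub_mul_cexp_le {a a' : ℝ → ℂ} {L : ℝ} (ha : ∀ s, HasDerivAt a (a' s) s)
    (ha_le : ∀ s, ‖a s‖ ≤ L) (ha'_le : ∀ s, ‖a' s‖ ≤ L) {lam κ r δ x : ℝ} (hlam : 0 ≤ lam)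
    (hx : |x| ≤ r) {w w' : ℂ} (hw : κ ≤ w.im) (hw' : κ ≤ w'.im) (hδ : ‖w - w'‖ ≤ δ) :
    ‖a x * cexp (I * lam * w) - a 0 * cexp (I * lam * w')‖
      ≤ L * (r + lam * δ) * Real.exp (-(lam * κ)) := by
  have hL : 0 ≤ L := (norm_nonneg _).trans (ha_le 0)
  have hre := re_I_mul_ofReal_mul_le hlam hw
  have hre' := re_I_mul_ofReal_mul_le hlam hw'
  have hlip : ‖a x - a 0‖ ≤ L * r := by
    have := convex_univ.norm_image_sub_le_of_norm_hasDerivWithin_le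
      (fun s _ => (ha s).hasDerivWithinAt) (fun s _ => ha'_le s) (Set.mem_univ 0) (Set.mem_univ x)
    rw [sub_zero, Real.norm_eq_abs] at this
    exact this.trans (mul_le_mul_of_nonneg_left hx hL)
  have hexp : ‖cexp (I * lam * w)‖ ≤ Real.exp (-(lam * κ)) := by
    rw [norm_exp]; exact Real.exp_le_exp.2 hre
  have hdiff : ‖cexp (I * lam * w) - cexp (I * lam * w')‖ ≤ Real.exp (-(lam * κ)) * (lam * δ) := by
    refine (norm_exp_sub_exp_le hre hre').trans (mul_le_mul_of_nonneg_left ?_ (Real.exp_pos _).le)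
    rw [← mul_sub, norm_mul, norm_mul, norm_I, one_mul, norm_real, Real.norm_of_nonneg hlam]
    exact mul_le_mul_of_nonneg_left hδ hlam
  calc ‖a x * cexp (I * lam * w) - a 0 * cexp (I * lam * w')‖
      = ‖(a x - a 0) * cexp (I * lam * w) + a 0 * (cexp (I * lam * w) - cexp (I * lam * w'))‖ := by
        ring_nf
    _ ≤ L * r * Real.exp (-(lam * κ)) + L * (Real.exp (-(lam * κ)) * (lam * δ)) := by
        refine (norm_add_le _ _).trans (add_le_add ?_ ?_) <;> rw [norm_mul]
        · exact mul_le_mul hlip hexp (norm_nonneg _) (mul_nonneg hL ((abs_nonneg x).trans hx))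
        · exact mul_le_mul (ha_le 0) hdiff (norm_nonneg _) hL
    _ = L * (r + lam * δ) * Real.exp (-(lam * κ)) := by ring

lemma mul_norm_sq_le_im_dotProduct_mulVec {ι : Type*} [Fintype ι] [DecidableEq ι]
    {M : Matrix ι ι ℂ} {c : ℝ} (hM : (M.map im - c • (1 : Matrix ι ι ℝ)).PosSemidef)
    (z : EuclideanSpace ℝ ι) :
    c * ‖z‖ ^ 2 ≤ ((fun i => (z i : ℂ)) ⬝ᵥ M *ᵥ fun i => (z i : ℂ)).im := by
  have hpsd := hM.dotProduct_mulVec_nonneg (fun i => z i)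
  have him : ((fun i => (z i : ℂ)) ⬝ᵥ M *ᵥ fun i => (z i : ℂ)).im
      = (fun i => z i) ⬝ᵥ M.map im *ᵥ fun i => z i := by
    simp [dotProduct, mulVec, im_sum, Finset.mul_sum]
  have hnorm : ‖z‖ ^ 2 = (fun i => z i) ⬝ᵥ fun i => z i := by
    rw [EuclideanSpace.norm_sq_eq]
    simp [dotProduct, sq]
  rw [him, hnorm]
  simpa [sub_mulVec, smul_mulVec, dotProduct_sub, dotProduct_smul, sub_nonneg] using hpsd

theorem stmt12_general (n : ℕ) (hn : 0 < n) (c A K R : ℝ)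
    (hc : 0 < c) (hA : 0 < A) :
    ∃ C : ℝ, 0 < C ∧
      ∀ lam : ℝ, 1 ≤ lam →
      ∀ M : Matrix (Fin n) (Fin n) ℂ, M.IsSymm →
        (M.map Complex.im - c • (1 : Matrix (Fin n) (Fin n) ℝ)).PosSemidef →
      ∀ (v : EuclideanSpace ℝ (Fin n)) (ρ : EuclideanSpace ℝ (Fin n) → ℂ)
        (τstar τ : EuclideanSpace ℝ (Fin n) → ℂ),
        (τstar = fun z => ((inner ℝ v z : ℝ) : ℂ) +
          (fun i => (z i : ℂ)) ⬝ᵥ M *ᵥ (fun i => (z i : ℂ))) →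
        (∀ z, ‖ρ z‖ ≤ K * ‖z‖ ^ 3) →
        (τ = fun z => τstar z + ρ z) →
        (∀ z : EuclideanSpace ℝ (Fin n), ‖z‖ ≤ R → c / 2 * ‖z‖ ^ 2 ≤ (τ z).im) →
      ∀ a a' : ℝ → ℂ,
        (∀ s : ℝ, HasDerivAt a (a' s) s) →
        (∀ s : ℝ, ‖a s‖ ≤ A * lam ^ ((n : ℝ) / 4)) →
        (∀ s : ℝ, ‖a' s‖ ≤ A * lam ^ ((n : ℝ) / 4)) →
        (∫ z in Metric.ball (0 : EuclideanSpace ℝ (Fin n)) R,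
            ‖a (z ⟨0, hn⟩) * Complex.exp (Complex.I * (lam : ℂ) * τ z)
              - a 0 * Complex.exp (Complex.I * (lam : ℂ) * τstar z)‖ ^ 2) ^ ((1 : ℝ) / 2)
          ≤ C * lam ^ (-(1 : ℝ) / 2) := by
  set IH := ∫ u, gaussEnvelope (EuclideanSpace ℝ (Fin n)) K (c / 2) u ^ 2
  have hIH : 0 ≤ IH := integral_nonneg fun _ => sq_nonneg _
  refine ⟨A * √IH + 1, by positivity, ?_⟩
  intro lam hlam M _ hM v ρ τstar τ hτstar hρ hτ hτim a a' ha ha_le ha'_le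
  have hlam0 : 0 < lam := one_pos.trans_le hlam
  set g := fun z => A * lam ^ ((n : ℝ) / 4) *
    gaussEnvelope (EuclideanSpace ℝ (Fin n)) (lam * K) (lam * (c / 2)) z
  have hpt : ∀ z ∈ Metric.ball 0 R,
      ‖a (z ⟨0, hn⟩) * cexp (I * lam * τ z) - a 0 * cexp (I * lam * τstar z)‖ ^ 2 ≤ g z ^ 2 := by
    intro z hz
    have hτstar_im : c / 2 * ‖z‖ ^ 2 ≤ (τstar z).im := by
      have hquad := mul_norm_sq_le_im_dotProduct_mulVec hM z
      simp only [hτstar, add_im, ofReal_im]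
      linarith [mul_nonneg hc.le (sq_nonneg ‖z‖)]
    have hρz : ‖τ z - τstar z‖ ≤ K * ‖z‖ ^ 3 := by simpa [hτ] using hρ z
    have hbound := norm_mul_cexp_sub_mul_cexp_le ha ha_le ha'_le hlam0.le (PiLp.norm_apply_le z ⟨0, hn⟩)
      (hτim z (mem_ball_zero_iff.1 hz).le) hτstar_im hρz
    gcongr
    refine hbound.trans_eq ?_
    simp only [g, gaussEnvelope, mul_assoc]
  have hg_int : Integrable (fun z => g z ^ 2) := by
    simpa only [g, mul_pow] using (integrable_gaussEnvelope_sq (V := EuclideanSpace ℝ (Fin n))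
      (lam * K) (by positivity : 0 < lam * (c / 2))).const_mul (A ^ 2 * (lam ^ ((n : ℝ) / 4)) ^ 2)
  have hg_integral : ∫ z, g z ^ 2 = A ^ 2 / lam * IH := by
    simpa only [finrank_euclideanSpace_fin] using
      integral_sq_mul_gaussEnvelope_scale (V := EuclideanSpace ℝ (Fin n)) A K (c / 2) hlam0
  -- `ρ` is arbitrary, so the integrand on the ball need not even be measurable.
  have hF_le := (setIntegral_le_integral_of_forall_le measurableSet_ball
    (fun _ => by positivity) hg_int (fun _ => sq_nonneg _) hpt).trans_eq hg_integral
  calc _ ≤ (A ^ 2 / lam * IH) ^ (1 / 2 : ℝ) :=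
        Real.rpow_le_rpow (integral_nonneg fun _ => by positivity) hF_le (by norm_num)
    _ = A * √IH * lam ^ (-(1 : ℝ) / 2) := by
        rw [← Real.sqrt_eq_rpow, Real.sqrt_mul' _ hIH, Real.sqrt_div' _ hlam0.le,
          Real.sqrt_sq hA.le, neg_div, Real.rpow_neg hlam0.le, ← Real.sqrt_eq_rpow]
        ring
    _ ≤ (A * √IH + 1) * lam ^ (-(1 : ℝ) / 2) := by gcongr; linarith

/-- `L²` approximation of a Gaussian beam by the auxiliary beam with frozen
amplitude and purely quadratic phase: with `Im M ≥ c·Id`, `|ρ(z)| ≤ K|z|³`,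
`Im τ(z) ≥ (c/2)|z|²` on `B(0,R)`, and `|a|, |a'| ≤ A λ^{n/4}`, one has
`‖a(z₁)e^{iλτ} − a(0)e^{iλτ*}‖_{L²(B(0,R))} ≤ C λ^{−1/2}` for all `λ ≥ 1`. -/
theorem stmt12 (n : ℕ) (hn : 0 < n) (c A K R : ℝ)
    (hc : 0 < c) (hA : 0 < A) (hK : 0 < K) (hR : 0 < R) :
    ∃ C : ℝ, 0 < C ∧
      ∀ lam : ℝ, 1 ≤ lam →
      ∀ M : Matrix (Fin n) (Fin n) ℂ, M.IsSymm →
        (M.map Complex.im - c • (1 : Matrix (Fin n) (Fin n) ℝ)).PosSemidef →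
      ∀ (v : EuclideanSpace ℝ (Fin n)) (ρ : EuclideanSpace ℝ (Fin n) → ℂ)
        (τstar τ : EuclideanSpace ℝ (Fin n) → ℂ),
        (τstar = fun z => ((inner ℝ v z : ℝ) : ℂ) +
          (fun i => (z i : ℂ)) ⬝ᵥ M *ᵥ (fun i => (z i : ℂ))) →
        (∀ z, ‖ρ z‖ ≤ K * ‖z‖ ^ 3) →
        (τ = fun z => τstar z + ρ z) →
        (∀ z : EuclideanSpace ℝ (Fin n), ‖z‖ ≤ R → c / 2 * ‖z‖ ^ 2 ≤ (τ z).im) →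
      ∀ a a' : ℝ → ℂ,
        (∀ s : ℝ, HasDerivAt a (a' s) s) →
        (∀ s : ℝ, ‖a s‖ ≤ A * lam ^ ((n : ℝ) / 4)) →
        (∀ s : ℝ, ‖a' s‖ ≤ A * lam ^ ((n : ℝ) / 4)) →
        (∫ z in Metric.ball (0 : EuclideanSpace ℝ (Fin n)) R,
            ‖a (z ⟨0, hn⟩) * Complex.exp (Complex.I * (lam : ℂ) * τ z)
              - a 0 * Complex.exp (Complex.I * (lam : ℂ) * τstar z)‖ ^ 2) ^ ((1 : ℝ) / 2)
          ≤ C * lam ^ (-(1 : ℝ) / 2) :=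
  stmt12_general n hn c A K R hc hA
end
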